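/- arXiv:2102.10509 — 2 statements merged into one kernel-verified Lean document; each statement's English description precedes it below -/
import Mathlib

section
/- Let 𝔽 be any field, let m, n, r ∈ ℕ, and let A ∈ 𝔽^{m × n} be a matrix of rank exactly r such that the top-left r × r submatrix A_{r×r} is invertible. Then A = A_{m×r} · (A_{r×r})^{−1} · A_{r×n}, where A_{x×y} denotes the submatrix of A consisting of the first x rows and the first y columns. In particular, the pair (A₁, A₂) := (A_{m×r}, (A_{r×r})^{−1} A_{r×n}) is a rank factorization of A (A = A₁A₂ with A₁ ∈ 𝔽^{m×r}, A₂ ∈ 𝔽^{r×n}), and A₂ contains the identity matrix I_r as its first r columns. -/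
open Matrix in
/-- **Lemma (rational rank factorization identity)**: if `A ∈ 𝔽^{m×n}` has rank exactly
`r` and its top-left `r × r` submatrix `A_{r×r}` is invertible, then
`A = A_{m×r} · (A_{r×r})⁻¹ · A_{r×n}`; in particular `(A₁, A₂) = (A_{m×r}, (A_{r×r})⁻¹ A_{r×n})`
is a rank factorization of `A`, and the first `r` columns of `A₂` form the identity
matrix `I_r`. -/
theorem statement5 (𝔽 : Type) [Field 𝔽] (m n r : ℕ) (hrm : r ≤ m) (hrn : r ≤ n)
    (A : Matrix (Fin m) (Fin n) 𝔽) (hrank : A.rank = r)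
    (hinv : IsUnit (A.submatrix (Fin.castLE hrm) (Fin.castLE hrn))) :
    A = (A.submatrix id (Fin.castLE hrn)) *
        ((A.submatrix (Fin.castLE hrm) (Fin.castLE hrn))⁻¹ *
          A.submatrix (Fin.castLE hrm) id) ∧
    ((A.submatrix (Fin.castLE hrm) (Fin.castLE hrn))⁻¹ *
        A.submatrix (Fin.castLE hrm) id).submatrix id (Fin.castLE hrn) = 1 := by
  set B := A.submatrix (Fin.castLE hrm) (Fin.castLE hrn) with hB
  set A₁ := A.submatrix id (Fin.castLE hrn) with hA₁
  set A₂ := A.submatrix (Fin.castLE hrm) id with hA₂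
  have hBdet : IsUnit B.det := (Matrix.isUnit_iff_isUnit_det B).mp hinv
  have hBinv : B⁻¹ * B = 1 := Matrix.nonsing_inv_mul B hBdet
  -- rank of B is r
  have hrB : B.rank = r := by rw [Matrix.rank_of_isUnit B hinv, Fintype.card_fin]
  -- B as a submatrix of A₁
  have hBsub : B = A₁.submatrix (Fin.castLE hrm) (Equiv.refl (Fin r)) := rfl
  have hπ : B.mulVecLin =
      (LinearMap.funLeft 𝔽 𝔽 (Fin.castLE hrm)) ∘ₗ A₁.mulVecLin := by
    rw [hBsub, Matrix.mulVecLin_submatrix]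
    ext x i
    rfl
  have hle : B.rank ≤ A₁.rank := by
    rw [Matrix.rank, Matrix.rank, hπ, LinearMap.range_comp]
    exact Submodule.finrank_map_le _ _
  have hrA₁ : A₁.rank = r := by
    refine le_antisymm ?_ (le_of_eq_of_le hrB.symm hle)
    simpa using A₁.rank_le_card_width
  -- span of columns
  have hsub : Set.range A₁ᵀ ⊆ Set.range Aᵀ := by
    rintro _ ⟨k, rfl⟩
    exact ⟨Fin.castLE hrn k, rfl⟩
  have hspan : Submodule.span 𝔽 (Set.range A₁ᵀ) = Submodule.span 𝔽 (Set.range Aᵀ) := by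
    apply Submodule.eq_of_le_of_finrank_le (Submodule.span_mono hsub)
    have hcA : A.rank = Module.finrank 𝔽 (Submodule.span 𝔽 (Set.range Aᵀ)) :=
      Matrix.rank_eq_finrank_span_cols A
    have hcA₁ : A₁.rank = Module.finrank 𝔽 (Submodule.span 𝔽 (Set.range A₁ᵀ)) :=
      Matrix.rank_eq_finrank_span_cols A₁
    rw [← hcA, ← hcA₁, hrank, hrA₁]
  have hmem : ∀ j, ∃ c : Fin r → 𝔽, ∑ k, c k • A₁ᵀ k = Aᵀ j := by
    intro j
    exact (Submodule.mem_span_range_iff_exists_fun 𝔽).mp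
      (by rw [hspan]; exact Submodule.subset_span ⟨j, rfl⟩)
  choose c hc using hmem
  set X : Matrix (Fin r) (Fin n) 𝔽 := Matrix.of fun k j => c j k with hXdef
  have hAX : A = A₁ * X := by
    ext i j
    have := congrFun (hc j) i
    simp only [Finset.sum_apply, Pi.smul_apply, smul_eq_mul, Matrix.transpose_apply] at this
    rw [Matrix.mul_apply, ← this]
    exact Finset.sum_congr rfl fun k _ => mul_comm _ _
  have hA₂X : A₂ = B * X := by
    ext i j
    have := congrFun (congrFun hAX (Fin.castLE hrm i)) j
    rw [Matrix.mul_apply] at this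
    rw [Matrix.mul_apply]
    exact this
  have hX : X = B⁻¹ * A₂ := by
    rw [hA₂X, ← Matrix.mul_assoc, hBinv, Matrix.one_mul]
  constructor
  · rw [← hX]; exact hAX
  · have h1 : (B⁻¹ * A₂).submatrix id (Fin.castLE hrn) = B⁻¹ * B := by
      ext i j
      rw [Matrix.submatrix_apply, Matrix.mul_apply, Matrix.mul_apply]
      rfl
    rw [h1, hBinv]
end

section
/- Let T be a k-tensor over a field 𝔽 (k ≥ 2) and let T̃ : 𝔽^N → 𝔽^{n_k} (N = n_1 + ⋯ + n_{k−1}) be its slicing along the last axis, a polynomial map whose coordinates are multilinear forms of degree k−1. For x ∈ 𝔽^N let D^{k−1} T̃(x) ∈ 𝔽^{n_k} ⊗ (𝔽^N)^{⊗(k−1)} denote the order-(k−1) formal total derivative of T̃ at x, i.e., the k-tensor whose entry at (i, j_1, …, j_{k−1}) is the iterated formal partial derivative ∂_{j_1}⋯∂_{j_{k−1}} T̃_i evaluated at x (since each T̃_i has degree k−1, these entries are constants independent of x). Then for every x ∈ 𝔽^N, PR(T) ≤ PR(D^{k−1} T̃(x)), where PR denotes partition rank over 𝔽. -/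
/-- `p`, a function of a multi-index, depends only on the coordinates in `S`. -/
def DependsOnlyOn {ι : Type*} {β : ι → Type*} {α : Type*}
    (p : ((i : ι) → β i) → α) (S : Set ι) : Prop :=
  ∀ x y : (i : ι) → β i, (∀ i ∈ S, x i = y i) → p x = p y

/-- `T` admits a partition-rank decomposition with `r` summands. -/
def HasPRDecomp {ι : Type*} {β : ι → Type*} {F : Type*} [CommRing F]
    (T : ((i : ι) → β i) → F) (r : ℕ) : Prop :=
  ∃ (S : Fin r → Set ι) (p q : Fin r → ((i : ι) → β i) → F),
    (∀ j, (S j).Nonempty ∧ S j ≠ Set.univ ∧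
      DependsOnlyOn (p j) (S j) ∧ DependsOnlyOn (q j) (S j)ᶜ) ∧
    ∀ I, T I = ∑ j, p j I * q j I

/-- The partition rank of a tensor `T`. -/
noncomputable def partitionRank {ι : Type*} {β : ι → Type*} {F : Type*} [CommRing F]
    (T : ((i : ι) → β i) → F) : ℕ :=
  sInf {r | HasPRDecomp T r}

/-- The `j`-th coordinate of the slicing of the `(k+1)`-tensor `T` along the last axis,
as a polynomial (a multilinear form of degree `k`). -/
noncomputable def sliceP {k : ℕ} {d : Fin (k+1) → ℕ} {F : Type*} [CommRing F]
    (T : ((i : Fin (k+1)) → Fin (d i)) → F) (j : Fin (d (Fin.last k))) :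
    MvPolynomial ((i : Fin k) × Fin (d i.castSucc)) F :=
  ∑ I : (i : Fin k) → Fin (d i.castSucc),
    MvPolynomial.C (T (Fin.snoc I j)) * ∏ i : Fin k, MvPolynomial.X ⟨i, I i⟩

/-- Iterated formal partial derivative `∂_{t 0} ⋯ ∂_{t (a-1)}`. -/
noncomputable def iterPDeriv {σ : Type*} {F : Type*} [CommSemiring F] :
    (a : ℕ) → (Fin a → σ) → MvPolynomial σ F → MvPolynomial σ F
  | 0, _, p => p
  | a+1, t, p => iterPDeriv a (fun s => t s.castSucc) (MvPolynomial.pderiv (t (Fin.last a)) p)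

/-- The mode sizes of the order-`k` total derivative `D^k T̃` of the slicing of a
`(k+1)`-tensor: one mode of size `n_{k+1}` (the last axis) and `k` modes each of
size `N = n_1 + ⋯ + n_k`. -/
def DerivIndex (k : ℕ) (d : Fin (k+1) → ℕ) : (Unit ⊕ Fin k) → Type
  | Sum.inl _ => Fin (d (Fin.last k))
  | Sum.inr _ => (i : Fin k) × Fin (d i.castSucc)

open MvPolynomial in
lemma iterPDeriv_zero {σ : Type*} {F : Type*} [CommSemiring F] (a : ℕ) (t : Fin a → σ) :
    iterPDeriv a t (0 : MvPolynomial σ F) = 0 := by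
  induction a with
  | zero => rfl
  | succ a ih => simp [iterPDeriv, ih]

open MvPolynomial in
lemma iterPDeriv_C_mul {σ : Type*} {F : Type*} [CommSemiring F] (a : ℕ) (t : Fin a → σ)
    (c : F) (p : MvPolynomial σ F) :
    iterPDeriv a t (C c * p) = C c * iterPDeriv a t p := by
  induction a generalizing p with
  | zero => rfl
  | succ a ih => simp [iterPDeriv, pderiv_C_mul, ih]

open MvPolynomial in
lemma iterPDeriv_sum {σ : Type*} {F : Type*} [CommSemiring F] (a : ℕ) (t : Fin a → σ)
    {α : Type*} (s : Finset α) (f : α → MvPolynomial σ F) :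
    iterPDeriv a t (∑ i ∈ s, f i) = ∑ i ∈ s, iterPDeriv a t (f i) := by
  induction a generalizing f with
  | zero => rfl
  | succ a ih => simp [iterPDeriv, map_sum, ih]

open MvPolynomial in
lemma pderiv_prod_X_ne {σ : Type*} [DecidableEq σ] {F : Type*} [CommRing F]
    (s : σ) (a : ℕ) (u : Fin a → σ) (h : ∀ i, u i ≠ s) :
    pderiv s (∏ i, X (u i) : MvPolynomial σ F) = 0 := by
  induction a with
  | zero => simp [pderiv_one]
  | succ a ih =>
    rw [Fin.prod_univ_castSucc, pderiv_mul, ih (fun i => u i.castSucc) (fun i => h _),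
      pderiv_X_of_ne (h _)]
    ring

open MvPolynomial in
lemma iterPDeriv_prod_X {σ : Type*} [DecidableEq σ] {F : Type*} [CommRing F]
    (a : ℕ) (v w : Fin a → σ) (h : ∀ s t, w s = v t → s = t) :
    iterPDeriv a w (∏ i, X (v i) : MvPolynomial σ F) =
      if ∀ t, w t = v t then 1 else 0 := by
  induction a with
  | zero => simp [iterPDeriv]
  | succ a ih =>
    rw [iterPDeriv, Fin.prod_univ_castSucc, pderiv_mul,
      pderiv_prod_X_ne _ _ _ (fun i hi => by
        have := h (Fin.last a) i.castSucc hi.symm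
        exact absurd this.symm (ne_of_lt (Fin.castSucc_lt_last i))),
      zero_mul, zero_add]
    by_cases hws : w (Fin.last a) = v (Fin.last a)
    · rw [hws, pderiv_X_self, mul_one,
        ih (fun i => v i.castSucc) (fun i => w i.castSucc)
          (fun s t hst => Fin.castSucc_injective _ (by
            have := h s.castSucc t.castSucc hst
            exact this))]
      congr 1
      simp only [eq_iff_iff]
      constructor
      · intro H t
        induction t using Fin.lastCases with
        | last => exact hws
        | cast i => exact H i
      · intro H t; exact H t.castSucc
    · rw [pderiv_X_of_ne (fun e => hws e.symm), mul_zero, iterPDeriv_zero,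
        if_neg (fun H => hws (H (Fin.last a)))]

open MvPolynomial in
lemma eval_iter_slice {k : ℕ} {d : Fin (k+1) → ℕ} {F : Type*} [CommRing F]
    (T : ((i : Fin (k+1)) → Fin (d i)) → F)
    (x : ((i : Fin k) × Fin (d i.castSucc)) → F)
    (J : (i : Fin (k+1)) → Fin (d i)) :
    eval x (iterPDeriv k (fun s => (⟨s, J s.castSucc⟩ : (i : Fin k) × Fin (d i.castSucc)))
      (sliceP T (J (Fin.last k)))) = T J := by
  classical
  rw [sliceP, iterPDeriv_sum]
  have key : ∀ I : (i : Fin k) → Fin (d i.castSucc),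
      iterPDeriv k (fun s => (⟨s, J s.castSucc⟩ : (i : Fin k) × Fin (d i.castSucc)))
        (C (T (Fin.snoc I (J (Fin.last k)))) * ∏ i : Fin k, X ⟨i, I i⟩) =
      C (T (Fin.snoc I (J (Fin.last k)))) *
        (if I = (fun i : Fin k => J i.castSucc) then 1 else 0) := by
    intro I
    rw [iterPDeriv_C_mul, iterPDeriv_prod_X k (fun i : Fin k => ⟨i, I i⟩)
      (fun s => ⟨s, J s.castSucc⟩) (fun s t hst => congrArg Sigma.fst hst)]
    congr 1
    simp only [eq_iff_iff, Sigma.mk.inj_iff, heq_eq_eq, true_and, funext_iff]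
    congr 1
    simp only [eq_iff_iff]
    exact forall_congr' fun t => eq_comm
  simp only [key, map_sum, map_mul, eval_C, apply_ite (eval x), map_one, map_zero,
    mul_ite, mul_one, mul_zero, eval_zero]
  rw [Finset.sum_ite_eq' Finset.univ (fun i : Fin k => J i.castSucc)
    (fun I => T (Fin.snoc I (J (Fin.last k))))]
  simp only [Finset.mem_univ, if_true]
  congr 1
  exact Fin.snoc_init_self J


instance instFintypeDerivIndex (k : ℕ) (d : Fin (k+1) → ℕ) :
    ∀ i, Fintype (DerivIndex k d i)
  | Sum.inl _ => inferInstanceAs (Fintype (Fin _))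
  | Sum.inr _ => inferInstanceAs (Fintype ((i : Fin k) × Fin (d i.castSucc)))

instance instDecEqDerivIndex (k : ℕ) (d : Fin (k+1) → ℕ) :
    ∀ i, DecidableEq (DerivIndex k d i)
  | Sum.inl _ => inferInstanceAs (DecidableEq (Fin _))
  | Sum.inr _ => inferInstanceAs (DecidableEq ((i : Fin k) × Fin (d i.castSucc)))

lemma hasPRDecomp_of_fintype {ι : Type*} [Fintype ι] [DecidableEq ι] {β : ι → Type*}
    [∀ i, Fintype (β i)] [∀ i, DecidableEq (β i)] {F : Type*} [CommRing F]
    (a b : ι) (hab : a ≠ b) (T : ((i : ι) → β i) → F) :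
    HasPRDecomp T (Fintype.card ((i : ι) → β i)) := by
  classical
  set r := Fintype.card ((i : ι) → β i) with hr
  let e : Fin r ≃ ((i : ι) → β i) := (Fintype.equivFin _).symm
  refine ⟨fun _ => {a}, fun j I => if I a = e j a then T (e j) else 0,
    fun j I => if ∀ l, l ≠ a → I l = e j l then 1 else 0, ?_, ?_⟩
  · intro j
    refine ⟨⟨a, rfl⟩, ?_, ?_, ?_⟩
    · intro h
      exact hab (show b = a from Set.eq_univ_iff_forall.mp h b).symm
    · intro X Y hXY
      dsimp only
      rw [hXY a rfl]
    · intro X Y hXY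
      have : (∀ l, l ≠ a → X l = e j l) ↔ (∀ l, l ≠ a → Y l = e j l) :=
        forall_congr' fun l => imp_congr_right fun hl => by rw [hXY l hl]
      simp only [this]
  · intro I
    have hterm : ∀ J' : (i : ι) → β i,
        (if I a = J' a then T J' else 0) * (if ∀ l, l ≠ a → I l = J' l then 1 else 0) =
        if J' = I then T I else 0 := by
      intro J'
      by_cases h : J' = I
      · subst h; simp
      · rw [if_neg h]
        by_cases h1 : I a = J' a
        · have h2 : ¬ ∀ l, l ≠ a → I l = J' l := fun H => h (funext fun l => by
            by_cases hl : l = a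
            · subst hl; exact h1.symm
            · exact (H l hl).symm)
          rw [if_neg h2, mul_zero]
        · rw [if_neg h1, zero_mul]
    calc T I = ∑ J' : (i : ι) → β i, if J' = I then T I else 0 := by
              rw [Finset.sum_ite_eq' Finset.univ I (fun _ => T I)]
              simp
      _ = ∑ j : Fin r, ((if I a = e j a then T (e j) else 0) *
            (if ∀ l, l ≠ a → I l = e j l then 1 else 0)) := by
          rw [← Equiv.sum_comp e (fun J' => if J' = I then T I else 0)]
          exact Finset.sum_congr rfl fun j _ => (hterm (e j)).symm


/-- **Claim (reconstruction from the highest derivative)**: for a tensor `T` of order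
`k+1 ≥ 2` over a field `𝔽`, with slicing `T̃ : 𝔽^N → 𝔽^{n_{k+1}}` along the last axis,
and for every point `x ∈ 𝔽^N`, the partition rank of `T` is at most the partition rank
of the order-`k` total derivative `D^k T̃(x)`, the `(k+1)`-tensor whose entry at
`(j, s_1, …, s_k)` is `∂_{s_1} ⋯ ∂_{s_k} T̃_j` evaluated at `x`. -/
theorem statement8 (k : ℕ) (hk : 1 ≤ k) (𝔽 : Type) [Field 𝔽]
    (d : Fin (k+1) → ℕ) (T : ((i : Fin (k+1)) → Fin (d i)) → 𝔽)
    (x : ((i : Fin k) × Fin (d i.castSucc)) → 𝔽) :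
    partitionRank T ≤
      partitionRank (fun I : (i : Unit ⊕ Fin k) → DerivIndex k d i =>
        MvPolynomial.eval x
          (iterPDeriv k (fun s => I (Sum.inr s)) (sliceP T (I (Sum.inl ()))))) := by
  classical
  set D : ((i : Unit ⊕ Fin k) → DerivIndex k d i) → 𝔽 :=
    fun I => MvPolynomial.eval x
      (iterPDeriv k (fun s => I (Sum.inr s)) (sliceP T (I (Sum.inl ())))) with hD
  set A : Set ℕ := {r | HasPRDecomp D r} with hA
  have hAne : A.Nonempty := by
    refine ⟨_, hasPRDecomp_of_fintype (Sum.inl ()) (Sum.inr ⟨0, hk⟩) (by simp) D⟩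
  have hmem : HasPRDecomp D (sInf A) := Nat.sInf_mem hAne
  obtain ⟨S, p, q, hS, hsum⟩ := hmem
  -- transfer the decomposition to `T`
  let φ : Fin (k+1) → Unit ⊕ Fin k :=
    fun i => Fin.lastCases (Sum.inl ()) (fun t => Sum.inr t) i
  let ψ : ((i : Fin (k+1)) → Fin (d i)) → ((i : Unit ⊕ Fin k) → DerivIndex k d i) :=
    fun J i => match i with
      | Sum.inl _ => J (Fin.last k)
      | Sum.inr t => ⟨t, J t.castSucc⟩
  have hkey : ∀ J, T J = D (ψ J) := fun J => (eval_iter_slice T x J).symm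
  have hsurj : ∀ c : Unit ⊕ Fin k, ∃ i, φ i = c := by
    rintro (⟨⟩ | t)
    · exact ⟨Fin.last k, Fin.lastCases_last⟩
    · exact ⟨t.castSucc, Fin.lastCases_castSucc t⟩
  have hψ : ∀ (J J' : (i : Fin (k+1)) → Fin (d i)) (c : Unit ⊕ Fin k),
      (∀ i : Fin (k+1), φ i = c → J i = J' i) → ψ J c = ψ J' c := by
    intro J J' c h
    match c with
    | Sum.inl u =>
      exact h (Fin.last k) Fin.lastCases_last
    | Sum.inr t =>
      have := h t.castSucc (Fin.lastCases_castSucc t)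
      show (⟨t, J t.castSucc⟩ : (i : Fin k) × Fin (d i.castSucc)) = ⟨t, J' t.castSucc⟩
      rw [this]
  have hT : HasPRDecomp T (sInf A) := by
    refine ⟨fun j => φ ⁻¹' S j, fun j J => p j (ψ J), fun j J => q j (ψ J), ?_, ?_⟩
    · intro j
      obtain ⟨hne, hproper, hp, hq⟩ := hS j
      obtain ⟨c, hc⟩ := hne
      obtain ⟨i, hi⟩ := hsurj c
      obtain ⟨c', hc'⟩ := Set.ne_univ_iff_exists_notMem _ |>.mp hproper
      obtain ⟨i', hi'⟩ := hsurj c'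
      refine ⟨⟨i, by simp [Set.mem_preimage, hi, hc]⟩, ?_, ?_, ?_⟩
      · apply (Set.ne_univ_iff_exists_notMem _).mpr
        exact ⟨i', by simp [Set.mem_preimage, hi', hc']⟩
      · intro X Y hXY
        exact hp (ψ X) (ψ Y) fun c hcS => hψ X Y c fun i hi =>
          hXY i (by rw [Set.mem_preimage, hi]; exact hcS)
      · intro X Y hXY
        exact hq (ψ X) (ψ Y) fun c hcS => hψ X Y c fun i hi =>
          hXY i (by intro hmem; exact hcS (by rwa [Set.mem_preimage, hi] at hmem))
    · intro J
      rw [hkey J, hsum (ψ J)]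
  calc partitionRank T ≤ sInf A := Nat.sInf_le hT
    _ = partitionRank D := rfl
end
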